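/- Let ∈ DQ^{n×n} be Hermitian with eigenvalues λ₁ ≤ λ₂ ≤ … ≤ λₙ (dual numbers, ordered by the total order on dual numbers) and orthonormal eigenbasis. Then for any appreciable dual quaternion vector v̂, λ₁ ≤ θ(Â, v̂) ≤ λₙ. -/

import Mathlib

open Quaternion Matrix TrivSqZeroExt

/-- The dual quaternions: dual numbers over the real quaternions. -/
abbrev DQ : Type := DualNumber (Quaternion ℝ)

/-- Conjugate of a dual quaternion: quaternion conjugation on both parts. -/
noncomputable def dqConj (q : DQ) : DQ := ⟨star q.fst, star q.snd⟩

/-- The inverse of an appreciable dual quaternion `q = q_st + q_I ε`, namely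
`q_st⁻¹ − q_st⁻¹ q_I q_st⁻¹ ε`. -/
noncomputable def dqInv (q : DQ) : DQ := ⟨q.fst⁻¹, -(q.fst⁻¹ * q.snd * q.fst⁻¹)⟩

/-- Embedding of dual numbers into dual quaternions. -/
noncomputable def d2dq (d : DualNumber ℝ) : DQ := ⟨(d.fst : Quaternion ℝ), (d.snd : Quaternion ℝ)⟩

/-- The dual number obtained from a dual quaternion by taking real parts componentwise
(used to read off a dual quaternion that is in fact a dual number). -/
noncomputable def toD (q : DQ) : DualNumber ℝ := ⟨q.fst.re, q.snd.re⟩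

/-- `x̂* ŷ = Σᵢ x̂ᵢ* ŷᵢ` for dual quaternion vectors. -/
noncomputable def dotC {n : ℕ} (x y : Fin n → DQ) : DQ := ∑ i, dqConj (x i) * y i

/-- Conjugate transpose of a dual quaternion matrix. -/
noncomputable def ctrans {n : ℕ} (M : Matrix (Fin n) (Fin n) DQ) : Matrix (Fin n) (Fin n) DQ :=
  Matrix.of fun i j => dqConj (M j i)

/-- The total order on dual numbers: `p ≤ q` iff `p_st < q_st`, or
`p_st = q_st` and `p_I ≤ q_I`. -/
def dle (p q : DualNumber ℝ) : Prop := p.fst < q.fst ∨ (p.fst = q.fst ∧ p.snd ≤ q.snd)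

/-- Square root of a positive appreciable dual number. -/
noncomputable def dsqrt (q : DualNumber ℝ) : DualNumber ℝ :=
  ⟨Real.sqrt q.fst, q.snd / (2 * Real.sqrt q.fst)⟩

/-- Absolute value of a dual number. -/
noncomputable def dabs (q : DualNumber ℝ) : DualNumber ℝ :=
  if q.fst = 0 then ⟨0, |q.snd|⟩ else ⟨|q.fst|, Real.sign q.fst * q.snd⟩

/-- Inverse of an appreciable dual number. -/
noncomputable def dInv (q : DualNumber ℝ) : DualNumber ℝ := ⟨q.fst⁻¹, -(q.snd / q.fst ^ 2)⟩

/-- The 2-norm of an appreciable dual quaternion vector: `‖ŷ‖₂ = √(ŷ* ŷ)`,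
a nonnegative dual number. -/
noncomputable def dnorm {n : ℕ} (y : Fin n → DQ) : DualNumber ℝ := dsqrt (toD (dotC y y))

/-!
Put `ŵ = Û* v̂`, so `v̂ = Û ŵ`. Unitarity gives `v̂* v̂ = Σ |ŵᵢ|²` and `v̂* Â v̂ = Σ λᵢ |ŵᵢ|²`,
where each `|ŵᵢ|²` is a dual number that is either `0` or has positive standard part.
Multiplying by such a number preserves the total order, so
`λ₁ Σ |ŵᵢ|² ≤ Σ λᵢ |ŵᵢ|² ≤ λₙ Σ |ŵᵢ|²`; since `v̂` is appreciable, `Σ |ŵᵢ|²` has positive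
standard part and dividing by it gives the bounds.
-/

section DualOrder

variable {p q p' q' t : DualNumber ℝ}

lemma dle_refl (p : DualNumber ℝ) : dle p p := .inr ⟨rfl, le_rfl⟩

lemma dle_add (h : dle p q) (h' : dle p' q') : dle (p + p') (q + q') := by
  unfold dle at *
  simp only [fst_add, snd_add]
  rcases h with h | ⟨h1, h2⟩ <;> rcases h' with h' | ⟨h1', h2'⟩
  · exact .inl (by linarith)
  · exact .inl (by linarith)
  · exact .inl (by linarith)
  · exact .inr ⟨by rw [h1, h1'], by linarith⟩

lemma dle_sum {ι : Type*} {s : Finset ι} {f g : ι → DualNumber ℝ}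
    (h : ∀ i ∈ s, dle (f i) (g i)) : dle (∑ i ∈ s, f i) (∑ i ∈ s, g i) := by
  induction s using Finset.cons_induction with
  | empty => exact dle_refl 0
  | cons a s _ ih =>
    simp only [Finset.sum_cons]
    exact dle_add (h a (Finset.mem_cons_self a s))
      (ih fun i hi => h i (Finset.mem_cons_of_mem hi))

lemma dle_mul_right (h : dle p q) (ht : t = 0 ∨ 0 < t.fst) : dle (p * t) (q * t) := by
  rcases ht with rfl | ht
  · simpa only [mul_zero] using dle_refl 0
  rcases h with h | ⟨h1, h2⟩
  · exact .inl (by simpa only [fst_mul] using mul_lt_mul_of_pos_right h ht)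
  · refine .inr ⟨by simp only [fst_mul, h1], ?_⟩
    simp only [DualNumber.snd_mul, h1]
    exact add_le_add_right (mul_le_mul_of_nonneg_right h2 ht.le) _

lemma dle_mul_inv_of_mul_dle (hq : 0 < q.fst) (h : dle (p * q) p') : dle p (p' * q⁻¹) := by
  simpa only [mul_assoc, TrivSqZeroExt.mul_inv_cancel hq.ne', mul_one] using
    dle_mul_right h (.inr (inv_pos.mpr hq) : q⁻¹ = 0 ∨ 0 < q⁻¹.fst)

lemma mul_inv_dle_of_dle_mul (hq : 0 < q.fst) (h : dle p' (p * q)) : dle (p' * q⁻¹) p := by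
  simpa only [mul_assoc, TrivSqZeroExt.mul_inv_cancel hq.ne', mul_one] using
    dle_mul_right h (.inr (inv_pos.mpr hq) : q⁻¹ = 0 ∨ 0 < q⁻¹.fst)

end DualOrder

@[simp] lemma fst_dqConj (q : DQ) : (dqConj q).fst = star q.fst := rfl
@[simp] lemma snd_dqConj (q : DQ) : (dqConj q).snd = star q.snd := rfl
@[simp] lemma fst_d2dq (p : DualNumber ℝ) : (d2dq p).fst = (p.fst : ℍ[ℝ]) := rfl
@[simp] lemma snd_d2dq (p : DualNumber ℝ) : (d2dq p).snd = (p.snd : ℍ[ℝ]) := rfl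
@[simp] lemma fst_dqInv (q : DQ) : (dqInv q).fst = q.fst⁻¹ := rfl
@[simp] lemma snd_dqInv (q : DQ) : (dqInv q).snd = -(q.fst⁻¹ * q.snd * q.fst⁻¹) := rfl
@[simp] lemma fst_toD (q : DQ) : (toD q).fst = q.fst.re := rfl
@[simp] lemma snd_toD (q : DQ) : (toD q).snd = q.snd.re := rfl

lemma dqConj_mul (x y : DQ) : dqConj (x * y) = dqConj y * dqConj x := by
  refine TrivSqZeroExt.ext (by simp) ?_
  simp only [snd_dqConj, fst_dqConj, DualNumber.snd_mul, star_add, star_mul]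
  exact add_comm _ _

lemma dqConj_add (x y : DQ) : dqConj (x + y) = dqConj x + dqConj y :=
  TrivSqZeroExt.ext (by simp) (by simp)

lemma dqConj_sum {ι : Type*} (s : Finset ι) (f : ι → DQ) :
    dqConj (∑ i ∈ s, f i) = ∑ i ∈ s, dqConj (f i) :=
  map_sum (AddMonoidHom.mk' dqConj dqConj_add) f s

lemma d2dq_add (p q : DualNumber ℝ) : d2dq (p + q) = d2dq p + d2dq q :=
  TrivSqZeroExt.ext (by simp) (by simp)

lemma d2dq_sum {ι : Type*} (s : Finset ι) (f : ι → DualNumber ℝ) :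
    d2dq (∑ i ∈ s, f i) = ∑ i ∈ s, d2dq (f i) :=
  map_sum (AddMonoidHom.mk' d2dq d2dq_add) f s

lemma d2dq_mul (p q : DualNumber ℝ) : d2dq (p * q) = d2dq p * d2dq q :=
  TrivSqZeroExt.ext (by simp) (by simp)

lemma d2dq_commute (c : DualNumber ℝ) (x : DQ) : Commute (d2dq c) x := by
  refine TrivSqZeroExt.ext (by simp [coe_commutes]) ?_
  simp only [DualNumber.snd_mul, fst_d2dq, snd_d2dq, coe_commutes]
  exact add_comm _ _

lemma toD_d2dq_mul_dqInv_d2dq (p q : DualNumber ℝ) :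
    toD (d2dq p * dqInv (d2dq q)) = p * q⁻¹ :=
  TrivSqZeroExt.ext (by simp [← coe_inv, ← coe_mul]) (by simp [← coe_inv, ← coe_mul])

noncomputable def dqNormSq (q : DQ) : DualNumber ℝ := ⟨normSq q.fst, 2 * (star q.fst * q.snd).re⟩

@[simp] lemma fst_dqNormSq (q : DQ) : (dqNormSq q).fst = normSq q.fst := rfl
@[simp] lemma snd_dqNormSq (q : DQ) : (dqNormSq q).snd = 2 * (star q.fst * q.snd).re := rfl

lemma dqConj_mul_self (q : DQ) : dqConj q * q = d2dq (dqNormSq q) := by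
  refine TrivSqZeroExt.ext (by simp [star_mul_self]) ?_
  simp only [DualNumber.snd_mul, fst_dqConj, snd_dqConj, snd_d2dq, snd_dqNormSq]
  rw [← self_add_star', star_mul, star_star]

lemma dqNormSq_fst_pos {q : DQ} (h : q.fst ≠ 0) : 0 < (dqNormSq q).fst :=
  normSq_nonneg.lt_of_ne (normSq_ne_zero.mpr h).symm

lemma dqNormSq_eq_zero_or_fst_pos (q : DQ) : dqNormSq q = 0 ∨ 0 < (dqNormSq q).fst := by
  by_cases h : q.fst = 0
  · exact .inl (TrivSqZeroExt.ext (by simp [h]) (by simp [h]))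
  · exact .inr (dqNormSq_fst_pos h)

lemma fst_sum_dqNormSq_pos {ι : Type*} [Fintype ι] {w : ι → DQ} (h : ∃ i, (w i).fst ≠ 0) :
    0 < (∑ i, dqNormSq (w i)).fst := by
  obtain ⟨i, hi⟩ := h
  rw [fst_sum]
  exact Finset.sum_pos' (fun j _ => normSq_nonneg) ⟨i, Finset.mem_univ i, dqNormSq_fst_pos hi⟩

section DotC

variable {n : ℕ}

lemma dotC_mulVec_left (M : Matrix (Fin n) (Fin n) DQ) (x y : Fin n → DQ) :
    dotC (M *ᵥ x) y = dotC x (ctrans M *ᵥ y) := by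
  simp only [dotC, mulVec, dotProduct, ctrans, of_apply, dqConj_sum, dqConj_mul,
    Finset.sum_mul, Finset.mul_sum, mul_assoc]
  exact Finset.sum_comm

lemma dotC_unitary_mulVec {U : Matrix (Fin n) (Fin n) DQ} (hU : ctrans U * U = 1)
    (x y : Fin n → DQ) : dotC (U *ᵥ x) (U *ᵥ y) = dotC x y := by
  rw [dotC_mulVec_left, mulVec_mulVec, hU, one_mulVec]

lemma dotC_self (w : Fin n → DQ) : dotC w w = d2dq (∑ i, dqNormSq (w i)) := by
  simp only [dotC, dqConj_mul_self, d2dq_sum]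

lemma dotC_diagonal_mulVec (c : Fin n → DualNumber ℝ) (w : Fin n → DQ) :
    dotC w (diagonal (fun i => d2dq (c i)) *ᵥ w) = d2dq (∑ i, c i * dqNormSq (w i)) := by
  simp only [dotC, mulVec_diagonal, d2dq_sum, d2dq_mul, ← dqConj_mul_self]
  exact Finset.sum_congr rfl fun i _ => ((d2dq_commute _ _).left_comm _).symm

lemma exists_fst_ne_zero_of_mulVec {M : Matrix (Fin n) (Fin n) DQ} {w : Fin n → DQ}
    (h : (fun i => ((M *ᵥ w) i).fst) ≠ 0) : ∃ i, (w i).fst ≠ 0 := by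
  contrapose! h
  funext j
  simp [mulVec, dotProduct, fst_sum, h]

end DotC

theorem rayleigh_bounds_general {n : ℕ} (hn : 0 < n) (A U : Matrix (Fin n) (Fin n) DQ)
    (lam : Fin n → DualNumber ℝ) (v : Fin n → DQ)
    (hU1 : ctrans U * U = 1) (hU2 : U * ctrans U = 1)
    (hAU : A * U = U * Matrix.diagonal (fun i => d2dq (lam i)))
    (hsort : ∀ i j : Fin n, i ≤ j → dle (lam i) (lam j))
    (hv : (fun i => (v i).fst) ≠ 0) :
    dle (lam ⟨0, hn⟩) (toD (dotC v (A *ᵥ v) * dqInv (dotC v v))) ∧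
    dle (toD (dotC v (A *ᵥ v) * dqInv (dotC v v))) (lam ⟨n - 1, Nat.sub_lt hn one_pos⟩) := by
  obtain ⟨w, rfl⟩ : ∃ w, U *ᵥ w = v := ⟨ctrans U *ᵥ v, by rw [mulVec_mulVec, hU2, one_mulVec]⟩
  have hS := fst_sum_dqNormSq_pos (exists_fst_ne_zero_of_mulVec hv)
  rw [mulVec_mulVec, hAU, ← mulVec_mulVec, dotC_unitary_mulVec hU1, dotC_unitary_mulVec hU1,
    dotC_self, dotC_diagonal_mulVec, toD_d2dq_mul_dqInv_d2dq]
  have hw := fun i => dqNormSq_eq_zero_or_fst_pos (w i)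
  constructor
  · refine dle_mul_inv_of_mul_dle hS ?_
    rw [Finset.mul_sum]
    exact dle_sum fun i _ => dle_mul_right (hsort _ _ (Nat.zero_le _)) (hw i)
  · refine mul_inv_dle_of_dle_mul hS ?_
    rw [Finset.mul_sum]
    exact dle_sum fun i _ => dle_mul_right (hsort _ _ (Nat.le_sub_one_of_lt i.isLt)) (hw i)

/-- for Hermitian `Â` with unitary diagonalization `Â Û = Û diag(λ₁,…,λₙ)`,
the eigenvalues `λᵢ` being dual numbers ordered increasingly in the total order on dual
numbers, any appreciable `v̂` satisfies `λ₁ ≤ θ(Â, v̂) ≤ λₙ`. -/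
theorem rayleigh_bounds {n : ℕ} (hn : 0 < n) (A U : Matrix (Fin n) (Fin n) DQ)
    (lam : Fin n → DualNumber ℝ) (v : Fin n → DQ)
    (hA : ctrans A = A)
    (hU1 : ctrans U * U = 1) (hU2 : U * ctrans U = 1)
    (hAU : A * U = U * Matrix.diagonal (fun i => d2dq (lam i)))
    (hsort : ∀ i j : Fin n, i ≤ j → dle (lam i) (lam j))
    (hv : (fun i => (v i).fst) ≠ 0) :
    dle (lam ⟨0, hn⟩) (toD (dotC v (A *ᵥ v) * dqInv (dotC v v))) ∧
    dle (toD (dotC v (A *ᵥ v) * dqInv (dotC v v))) (lam ⟨n - 1, Nat.sub_lt hn one_pos⟩) :=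
  rayleigh_bounds_general hn A U lam v hU1 hU2 hAU hsort hv
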